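/- arXiv:2405.20233 — 4 statements merged into one kernel-verified Lean document; each statement's English description precedes it below -/
import Mathlib

section
/- Let A, B, C, D be real numbers and let g, h : ℕ → ℝ. Define the state x : ℕ → ℝ by x(0) = B·g(0) and x(n+1) = A·x(n) + B·g(n+1), and the output u : ℕ → ℝ by u(n) = C·x(n) + D·g(n). Let ĝ(n) = g(n) + (h ∗ g)(n), and define x̂, û from ĝ by the same rules: x̂(0) = B·ĝ(0), x̂(n+1) = A·x̂(n) + B·ĝ(n+1), û(n) = C·x̂(n) + D·ĝ(n). Then for every n ∈ ℕ, û(n) = u(n) + (h ∗ u)(n); that is, the equivalent post-optimizer filter ĥ coincides with h. -/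
/-- Discrete (causal) convolution of two real sequences:
`(a ∗ b)(n) = ∑_{k=0}^{n} a(k)·b(n−k)`. -/
def conv (a b : ℕ → ℝ) (n : ℕ) : ℝ := ∑ k ∈ Finset.range (n + 1), a k * b (n - k)

lemma conv_add (h a b : ℕ → ℝ) (hab : ∀ n, a n = b n) (n : ℕ) :
    conv h a n = conv h b n := by
  unfold conv; exact Finset.sum_congr rfl fun k _ => by rw [hab]

/-- **Theorem 1 (time domain).** For the linear optimizer with state recursion
`x(n+1) = A·x(n) + B·g(n+1)`, `x(0) = B·g(0)`, and output `u(n) = C·x(n) + D·g(n)`,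
filtering the input gradients by `h` and adding (ĝ = g + h∗g) yields an output
`û = u + h∗u`, i.e. the equivalent post-optimizer filter coincides with `h`. -/
theorem grokfast_linear_optimizer_filter_equiv
    (A B C D : ℝ) (g h : ℕ → ℝ)
    (x u ghat xhat uhat : ℕ → ℝ)
    (hx0 : x 0 = B * g 0)
    (hx : ∀ n : ℕ, x (n + 1) = A * x n + B * g (n + 1))
    (hu : ∀ n : ℕ, u n = C * x n + D * g n)
    (hghat : ∀ n : ℕ, ghat n = g n + conv h g n)
    (hxhat0 : xhat 0 = B * ghat 0)
    (hxhat : ∀ n : ℕ, xhat (n + 1) = A * xhat n + B * ghat (n + 1))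
    (huhat : ∀ n : ℕ, uhat n = C * xhat n + D * ghat n) :
    ∀ n : ℕ, uhat n = u n + conv h u n := by
  -- key recursion for conv h x
  have hconvx : ∀ n : ℕ, conv h x (n + 1) = A * conv h x n + B * conv h g (n + 1) := by
    intro n
    unfold conv
    rw [Finset.sum_range_succ (f := fun k => h k * x (n + 1 - k)),
        Finset.sum_range_succ (f := fun k => h k * g (n + 1 - k))]
    simp only [Nat.sub_self]
    have : ∀ k ∈ Finset.range (n + 1),
        h k * x (n + 1 - k) = A * (h k * x (n - k)) + B * (h k * g (n + 1 - k)) := by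
      intro k hk
      have hkle : k ≤ n := Nat.lt_succ_iff.mp (Finset.mem_range.mp hk)
      have : n + 1 - k = (n - k) + 1 := by omega
      rw [this, hx (n - k)]; ring
    rw [Finset.sum_congr rfl this, Finset.sum_add_distrib, ← Finset.mul_sum,
        ← Finset.mul_sum, hx0]
    ring
  -- xhat = x + conv h x
  have hxx : ∀ n : ℕ, xhat n = x n + conv h x n := by
    intro n
    induction n with
    | zero =>
        rw [hxhat0, hghat 0, hx0]
        unfold conv
        simp [Finset.sum_range_one, hx0]
        ring
    | succ n ih =>
        rw [hxhat n, ih, hghat (n + 1), hx n, hconvx n]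
        ring
  intro n
  have hconvu : conv h u n = C * conv h x n + D * conv h g n := by
    unfold conv
    rw [Finset.mul_sum, Finset.mul_sum, ← Finset.sum_add_distrib]
    exact Finset.sum_congr rfl fun k _ => by rw [hu]; ring
  rw [huhat n, hxx n, hghat n, hu n, hconvu]
  ring
end

section
/- Let μ, τ, η be real numbers and let g, h : ℕ → ℝ. Define the momentum m : ℕ → ℝ by m(0) = (1−τ)·g(0) and m(n+1) = μ·m(n) + (1−τ)·g(n+1), and the parameter update u : ℕ → ℝ by u(n) = −η·m(n). Let ĝ(n) = g(n) + (h ∗ g)(n), and define m̂, û from ĝ by the same rules: m̂(0) = (1−τ)·ĝ(0), m̂(n+1) = μ·m̂(n) + (1−τ)·ĝ(n+1), û(n) = −η·m̂(n). Then for every n ∈ ℕ, û(n) = u(n) + (h ∗ u)(n). -/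
/-- **Proposition 2.** For SGD with momentum `μ`, dampening `τ`, learning rate `η`:
`m(0) = (1−τ)·g(0)`, `m(n+1) = μ·m(n) + (1−τ)·g(n+1)`, `u(n) = −η·m(n)`.
Filtering the gradients by `h` and adding (ĝ = g + h∗g) yields `û = u + h∗u`. -/
theorem grokfast_sgd_momentum_filter_equiv
    (μ τ η : ℝ) (g h : ℕ → ℝ)
    (m u ghat mhat uhat : ℕ → ℝ)
    (hm0 : m 0 = (1 - τ) * g 0)
    (hm : ∀ n : ℕ, m (n + 1) = μ * m n + (1 - τ) * g (n + 1))
    (hu : ∀ n : ℕ, u n = -η * m n)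
    (hghat : ∀ n : ℕ, ghat n = g n + conv h g n)
    (hmhat0 : mhat 0 = (1 - τ) * ghat 0)
    (hmhat : ∀ n : ℕ, mhat (n + 1) = μ * mhat n + (1 - τ) * ghat (n + 1))
    (huhat : ∀ n : ℕ, uhat n = -η * mhat n) :
    ∀ n : ℕ, uhat n = u n + conv h u n := by
  have key : ∀ n : ℕ, mhat n = m n + conv h m n := by
    intro n
    induction n with
    | zero =>
      simp [hmhat0, hghat, conv, hm0]
      ring
    | succ n ih =>
      have hconv : conv h m (n + 1) = μ * conv h m n + (1 - τ) * conv h g (n + 1) := by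
        unfold conv
        rw [Finset.sum_range_succ, Finset.sum_range_succ (f := fun k => h k * g (n + 1 - k))]
        have : ∀ k ∈ Finset.range (n + 1), h k * m (n + 1 - k)
            = μ * (h k * m (n - k)) + (1 - τ) * (h k * g (n + 1 - k)) := by
          intro k hk
          have hk' : k ≤ n := Nat.lt_succ_iff.mp (Finset.mem_range.mp hk)
          have h1 : n + 1 - k = (n - k) + 1 := by omega
          rw [h1, hm]
          have h2 : n - k + 1 = n + 1 - k := by omega
          rw [h2]; ring
        rw [Finset.sum_congr rfl this, Finset.sum_add_distrib, ← Finset.mul_sum,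
          ← Finset.mul_sum]
        simp [hm0]
        ring
      rw [hmhat, ih, hghat, hm, hconv]
      ring
  intro n
  have hconvu : conv h u n = -η * conv h m n := by
    unfold conv
    rw [Finset.mul_sum]
    exact Finset.sum_congr rfl fun k _ => by rw [hu]; ring
  rw [huhat, key, hu, hconvu]
  ring
end

section
/- Let μ, τ, η be real numbers and let g, h : ℕ → ℝ. Define the momentum m : ℕ → ℝ by m(0) = (1−τ)·g(0) and m(n+1) = μ·m(n) + (1−τ)·g(n+1), and the parameter update u : ℕ → ℝ by u(n) = −η·(g(n) + μ·m(n)). Let ĝ(n) = g(n) + (h ∗ g)(n), and define m̂, û from ĝ by the same rules: m̂(0) = (1−τ)·ĝ(0), m̂(n+1) = μ·m̂(n) + (1−τ)·ĝ(n+1), û(n) = −η·(ĝ(n) + μ·m̂(n)). Then for every n ∈ ℕ, û(n) = u(n) + (h ∗ u)(n). -/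
/-- **Proposition 3.** For SGD with Nesterov's momentum `μ`, dampening `τ`, learning rate `η`:
`m(0) = (1−τ)·g(0)`, `m(n+1) = μ·m(n) + (1−τ)·g(n+1)`, `u(n) = −η·(g(n) + μ·m(n))`.
Filtering the gradients by `h` and adding (ĝ = g + h∗g) yields `û = u + h∗u`. -/
theorem grokfast_nesterov_filter_equiv
    (μ τ η : ℝ) (g h : ℕ → ℝ)
    (m u ghat mhat uhat : ℕ → ℝ)
    (hm0 : m 0 = (1 - τ) * g 0)
    (hm : ∀ n : ℕ, m (n + 1) = μ * m n + (1 - τ) * g (n + 1))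
    (hu : ∀ n : ℕ, u n = -η * (g n + μ * m n))
    (hghat : ∀ n : ℕ, ghat n = g n + conv h g n)
    (hmhat0 : mhat 0 = (1 - τ) * ghat 0)
    (hmhat : ∀ n : ℕ, mhat (n + 1) = μ * mhat n + (1 - τ) * ghat (n + 1))
    (huhat : ∀ n : ℕ, uhat n = -η * (ghat n + μ * mhat n)) :
    ∀ n : ℕ, uhat n = u n + conv h u n := by
  have key : ∀ n : ℕ, mhat n = m n + conv h m n := by
    intro n
    induction n with
    | zero =>
      simp [hmhat0, hghat, conv, hm0]
      ring
    | succ n ih =>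
      rw [hmhat, ih, hghat, hm]
      have h1 : conv h m (n + 1)
          = (∑ k ∈ Finset.range (n + 1), h k * m (n + 1 - k)) + h (n+1) * m 0 := by
        rw [conv, Finset.sum_range_succ]
        simp
      have h2 : conv h g (n + 1)
          = (∑ k ∈ Finset.range (n + 1), h k * g (n + 1 - k)) + h (n+1) * g 0 := by
        rw [conv, Finset.sum_range_succ]
        simp
      have h3 : ∑ k ∈ Finset.range (n + 1), h k * m (n + 1 - k)
          = μ * conv h m n + (1 - τ) * ∑ k ∈ Finset.range (n + 1), h k * g (n + 1 - k) := by
        rw [conv, Finset.mul_sum, Finset.mul_sum, ← Finset.sum_add_distrib]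
        refine Finset.sum_congr rfl fun k hk => ?_
        have hkn : k ≤ n := Nat.lt_succ_iff.mp (Finset.mem_range.mp hk)
        have : n + 1 - k = (n - k) + 1 := by omega
        rw [this, hm]
        ring
      rw [h1, h2, h3, hm0]
      ring
  intro n
  have hconv : conv h u n = -η * (conv h g n + μ * conv h m n) := by
    simp only [conv, mul_add, Finset.mul_sum, ← Finset.sum_add_distrib]
    refine Finset.sum_congr rfl fun k _ => ?_
    rw [hu]
    ring
  rw [huhat, hghat, key, hu, hconv]
  ring
end

section
/- Let A, B, C, D be real numbers with |A| < 1, let ω ∈ ℝ, and let g, h : ℕ → ℝ be such that ∑_t |g(t)| and ∑_t |h(t)| converge. Define x(0) = B·g(0), x(n+1) = A·x(n) + B·g(n+1), u(n) = C·x(n) + D·g(n); define ĝ(n) = g(n) + (h ∗ g)(n), x̂(0) = B·ĝ(0), x̂(n+1) = A·x̂(n) + B·ĝ(n+1), û(n) = C·x̂(n) + D·ĝ(n). Then ∑'_{n∈ℕ} û(n)·exp(−i·ω·n) = ( 1 + ∑'_{t∈ℕ} h(t)·exp(−i·ω·t) )·( ∑'_{n∈ℕ} u(n)·exp(−i·ω·n)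 ). -/
namespace GrokfastAux

noncomputable def e (ω : ℝ) (n : ℕ) : ℂ := Complex.exp (-(Complex.I * ω * n))

lemma e_norm (ω : ℝ) (n : ℕ) : ‖e ω n‖ = 1 := by
  simp [e, Complex.norm_exp, Complex.mul_re, Complex.mul_im]

lemma e_mul {ω : ℝ} {k n : ℕ} (hk : k ≤ n) : e ω k * e ω (n - k) = e ω n := by
  rw [e, e, e, ← Complex.exp_add]
  congr 1
  push_cast [Nat.cast_sub hk]
  ring

lemma summable_f {ω : ℝ} {a : ℕ → ℝ} (ha : Summable fun n => |a n|) :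
    Summable fun n => ‖(a n : ℂ) * e ω n‖ := by
  have : (fun n => ‖(a n : ℂ) * e ω n‖) = fun n => |a n| := by
    funext n
    rw [norm_mul, e_norm, mul_one, Complex.norm_real, Real.norm_eq_abs]
  rw [this]; exact ha

lemma dtft_conv (ω : ℝ) (a b : ℕ → ℝ) (ha : Summable fun n => |a n|)
    (hb : Summable fun n => |b n|) :
    ∑' n : ℕ, ((conv a b n : ℝ) : ℂ) * e ω n
      = (∑' n : ℕ, (a n : ℂ) * e ω n) * ∑' n : ℕ, (b n : ℂ) * e ω n := by
  rw [tsum_mul_tsum_eq_tsum_sum_range_of_summable_norm (summable_f ha) (summable_f hb)]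
  refine tsum_congr fun n => ?_
  rw [conv]
  push_cast
  rw [Finset.sum_mul]
  refine Finset.sum_congr rfl fun k hk => ?_
  have hk' : k ≤ n := Nat.lt_succ_iff.mp (Finset.mem_range.mp hk)
  rw [mul_mul_mul_comm, e_mul hk']

lemma summable_abs_conv {a b : ℕ → ℝ} (ha : Summable fun n => |a n|)
    (hb : Summable fun n => |b n|) : Summable fun n => |conv a b n| := by
  have h1 : Summable fun n : ℕ => ‖∑ k ∈ Finset.range (n + 1), a k * b (n - k)‖ :=
    summable_norm_sum_mul_range_of_summable_norm
      (by simpa only [Real.norm_eq_abs] using ha) (by simpa only [Real.norm_eq_abs] using hb)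
  simp only [conv]
  simpa only [Real.norm_eq_abs] using h1

lemma resp (A B C D : ℝ) (g x u : ℕ → ℝ)
    (hx0 : x 0 = B * g 0)
    (hx : ∀ n : ℕ, x (n + 1) = A * x n + B * g (n + 1))
    (hu : ∀ n : ℕ, u n = C * x n + D * g n) :
    ∀ n : ℕ, u n = conv (fun m => C * (A ^ m * B) + if m = 0 then D else 0) g n := by
  have hxconv : ∀ n : ℕ, x n = conv (fun m => A ^ m * B) g n := by
    intro n
    induction n with
    | zero => simp [conv, hx0]
    | succ n ih =>
      rw [hx n, ih, conv, conv, Finset.sum_range_succ' _ (n + 1)]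
      simp only [Nat.succ_sub_succ_eq_sub, pow_zero, one_mul, Nat.sub_zero]
      rw [Finset.mul_sum]
      congr 1
      refine Finset.sum_congr rfl fun k _ => by rw [pow_succ]; ring
  intro n
  rw [hu n, hxconv n, conv, conv]
  have hD : ∑ k ∈ Finset.range (n + 1), (if k = 0 then D else 0) * g (n - k) = D * g n := by
    rw [Finset.sum_eq_single 0]
    · simp
    · intro k _ hk; simp [hk]
    · intro hk; simp at hk
  calc C * ∑ k ∈ Finset.range (n + 1), A ^ k * B * g (n - k) + D * g n
      = ∑ k ∈ Finset.range (n + 1), C * (A ^ k * B) * g (n - k)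
        + ∑ k ∈ Finset.range (n + 1), (if k = 0 then D else 0) * g (n - k) := by
        rw [hD, Finset.mul_sum]; congr 1; exact Finset.sum_congr rfl fun k _ => by ring
    _ = ∑ k ∈ Finset.range (n + 1),
          (C * (A ^ k * B) + if k = 0 then D else 0) * g (n - k) := by
        rw [← Finset.sum_add_distrib]
        exact Finset.sum_congr rfl fun k _ => by ring

lemma summable_abs_w (A B C D : ℝ) (hA : |A| < 1) :
    Summable fun m => |C * (A ^ m * B) + if m = 0 then D else 0| := by
  have h1 : Summable fun m : ℕ => |C| * |B| * |A| ^ m :=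
    (summable_geometric_of_lt_one (abs_nonneg A) hA).mul_left _
  have h2 : Summable fun m : ℕ => if m = 0 then |D| else 0 := by
    apply summable_of_ne_finset_zero (s := {0})
    intro m hm
    simp only [Finset.mem_singleton] at hm
    simp [hm]
  refine Summable.of_nonneg_of_le (fun m => abs_nonneg _) (fun m => ?_) (h1.add h2)
  calc |C * (A ^ m * B) + if m = 0 then D else 0|
      ≤ |C * (A ^ m * B)| + |if m = 0 then D else 0| := abs_add_le _ _
    _ ≤ |C| * |B| * |A| ^ m + if m = 0 then |D| else 0 := by
        refine add_le_add (le_of_eq ?_) ?_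
        · rw [abs_mul, abs_mul, abs_pow]; ring
        · split <;> simp

end GrokfastAux

open GrokfastAux in
/-- **Theorem 1 (frequency domain).** For the linear optimizer with state recursion
`x(n+1) = A·x(n) + B·g(n+1)`, `x(0) = B·g(0)`, output `u(n) = C·x(n) + D·g(n)`,
and `|A| < 1`, if `g` and `h` are absolutely summable then the DTFT of the output
`û` produced from the filtered gradients `ĝ = g + h∗g` equals `(1 + H(ω))·U(ω)`,
where `H(ω) = ∑_t h(t)e^{−iωt}` and `U(ω) = ∑_n u(n)e^{−iωn}`. -/
theorem grokfast_linear_optimizer_filter_equiv_freq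
    (A B C D : ℝ) (hA : |A| < 1) (ω : ℝ) (g h : ℕ → ℝ)
    (hg : Summable fun t : ℕ => |g t|)
    (hh : Summable fun t : ℕ => |h t|)
    (x u ghat xhat uhat : ℕ → ℝ)
    (hx0 : x 0 = B * g 0)
    (hx : ∀ n : ℕ, x (n + 1) = A * x n + B * g (n + 1))
    (hu : ∀ n : ℕ, u n = C * x n + D * g n)
    (hghat : ∀ n : ℕ, ghat n = g n + conv h g n)
    (hxhat0 : xhat 0 = B * ghat 0)
    (hxhat : ∀ n : ℕ, xhat (n + 1) = A * xhat n + B * ghat (n + 1))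
    (huhat : ∀ n : ℕ, uhat n = C * xhat n + D * ghat n) :
    ∑' n : ℕ, (uhat n : ℂ) * Complex.exp (-(Complex.I * ω * n))
      = (1 + ∑' t : ℕ, (h t : ℂ) * Complex.exp (-(Complex.I * ω * t)))
          * ∑' n : ℕ, (u n : ℂ) * Complex.exp (-(Complex.I * ω * n)) := by
  set w : ℕ → ℝ := fun m => C * (A ^ m * B) + if m = 0 then D else 0 with hw
  have hwsum : Summable fun m => |w m| := summable_abs_w A B C D hA
  have hghat_abs : Summable fun n => |ghat n| := by
    have hcv : Summable fun n => |conv h g n| := summable_abs_conv hh hg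
    refine Summable.of_nonneg_of_le (fun n => abs_nonneg _) (fun n => ?_) (hg.add hcv)
    rw [hghat n]; exact abs_add_le _ _
  have hu' : ∀ n, u n = conv w g n := resp A B C D g x u hx0 hx hu
  have huhat' : ∀ n, uhat n = conv w ghat n := resp A B C D ghat xhat uhat hxhat0 hxhat huhat
  have key1 : ∑' n : ℕ, (uhat n : ℂ) * e ω n
      = (∑' n : ℕ, (w n : ℂ) * e ω n) * ∑' n : ℕ, (ghat n : ℂ) * e ω n := by
    rw [← dtft_conv ω w ghat hwsum hghat_abs]
    exact tsum_congr fun n => by rw [huhat' n]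
  have key2 : ∑' n : ℕ, (u n : ℂ) * e ω n
      = (∑' n : ℕ, (w n : ℂ) * e ω n) * ∑' n : ℕ, (g n : ℂ) * e ω n := by
    rw [← dtft_conv ω w g hwsum hg]
    exact tsum_congr fun n => by rw [hu' n]
  have key3 : ∑' n : ℕ, (ghat n : ℂ) * e ω n
      = (1 + ∑' t : ℕ, (h t : ℂ) * e ω t) * ∑' n : ℕ, (g n : ℂ) * e ω n := by
    have hsplit : ∑' n : ℕ, (ghat n : ℂ) * e ω n
        = (∑' n : ℕ, (g n : ℂ) * e ω n) + ∑' n : ℕ, ((conv h g n : ℝ) : ℂ) * e ω n := by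
      rw [← Summable.tsum_add ((summable_f hg).of_norm) ((summable_f (summable_abs_conv hh hg)).of_norm)]
      refine tsum_congr fun n => ?_
      rw [hghat n]; push_cast; ring
    rw [hsplit, dtft_conv ω h g hh hg]
    ring
  show ∑' n : ℕ, (uhat n : ℂ) * e ω n
      = (1 + ∑' t : ℕ, (h t : ℂ) * e ω t) * ∑' n : ℕ, (u n : ℂ) * e ω n
  rw [key1, key2, key3]
  ring
end
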